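/- Let T be a rooted binary phylogenetic tree on leaf set [n]. Let A_T be the integer matrix with rows indexed by {0} ∪ int(T) and columns indexed by Z^n_{2,even}, whose column for x ∈ Z^n_{2,even} is the exponent vector e_0 + Σ_{v ∈ top(x)} e_v of the monomial φ_T(q_x). Then A_T has rank n (the number of rows). -/

import Mathlib

/-- Rooted binary trees with leaves labeled by natural numbers. -/
inductive PhyloTree where
  | leaf : ℕ → PhyloTree
  | node : PhyloTree → PhyloTree → PhyloTree
deriving DecidableEq

namespace PhyloTree

/-- The set of leaf labels of a tree. -/
def leaves : PhyloTree → Finset ℕ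
  | leaf i => {i}
  | node l r => leaves l ∪ leaves r

/-- The list of leaf labels (left-to-right). -/
def leafList : PhyloTree → List ℕ
  | leaf i => [i]
  | node l r => leafList l ++ leafList r

/-- `t` is a rooted binary phylogenetic tree on leaf set `[n] = {0, …, n-1}`:
its leaves are bijectively labeled by `{0, …, n-1}`. -/
def IsPhylo (n : ℕ) (t : PhyloTree) : Prop :=
  t.leafList.Nodup ∧ t.leafList.toFinset = Finset.range n

/-- The subtrees of `t`; these are identified with the vertices of `t`. -/
def subtrees : PhyloTree → Finset PhyloTree
  | leaf i => {leaf i}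
  | node l r => insert (node l r) (subtrees l ∪ subtrees r)

/-- Whether the root of the tree is an internal (non-leaf) vertex. -/
def isInternal : PhyloTree → Bool
  | leaf _ => false
  | node _ _ => true

/-- The internal vertices of `t`, identified with the subtrees rooted at them. -/
def internalVertices (t : PhyloTree) : Finset PhyloTree :=
  t.subtrees.filter (fun s => s.isInternal)

/-- The most recent common ancestor of the leaves labeled `i` and `j`,
identified with the subtree rooted at it. -/
def mrca (t : PhyloTree) (i j : ℕ) : PhyloTree :=
  match t with
  | leaf a => leaf a
  | node l r =>
    if i ∈ l.leaves ∧ j ∈ l.leaves then mrca l i j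
    else if i ∈ r.leaves ∧ j ∈ r.leaves then mrca r i j
    else node l r

/-- The most recent common ancestor of a set `p` of leaf labels. -/
def mrcaSet (t : PhyloTree) (p : Finset ℕ) : PhyloTree :=
  match t with
  | leaf a => leaf a
  | node l r =>
    if p ⊆ l.leaves then mrcaSet l p
    else if p ⊆ r.leaves then mrcaSet r p
    else node l r

/-- A vertex (= subtree) is a top-most node of a path in the system of disjoint
paths `𝔓(x)` iff an odd number of elements of `x` lies below each of its two
children. -/
def isTopOf (x : Finset ℕ) : PhyloTree → Bool
  | leaf _ => false
  | node l r => decide (Odd (x ∩ l.leaves).card) && decide (Odd (x ∩ r.leaves).card)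

/-- `top(x)`: the set of top-most nodes of the paths in the system `𝔓(x)` of
pairwise disjoint paths joining the leaves in `x`. -/
def topSet (t : PhyloTree) (x : Finset ℕ) : Finset PhyloTree :=
  t.subtrees.filter (fun s => isTopOf x s)

/-- The vertices of the path in `t` between the leaves of the pair `p` (more
generally, the vertices of the smallest subtree of `t` spanning `p`). -/
def pathSet (t : PhyloTree) (p : Finset ℕ) : Finset PhyloTree :=
  (mrcaSet t p).subtrees.filter (fun s => ∃ ℓ ∈ p, ℓ ∈ s.leaves)

/-- `u` is a strict descendant of `w`. -/
def IsStrictDescendant (u w : PhyloTree) : Prop :=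
  u ≠ w ∧ u ∈ w.subtrees

end PhyloTree

/-- `ℤ₂ⁿ`-vectors with an even number of ones, encoded as even-size subsets of `Fin n`. -/
abbrev EvenSubsets (n : ℕ) := {x : Finset (Fin n) // Even x.card}

/-- Forget the bound `n`, regarding a set of coordinates as a set of leaf labels. -/
def EvenSubsets.toNat {n : ℕ} (x : EvenSubsets n) : Finset ℕ := x.1.image Fin.val

/-- The vector `1_{i,j}` with ones exactly in positions `i ≠ j`. -/
def pairIdx {n : ℕ} (i j : Fin n) (h : i ≠ j) : EvenSubsets n :=
  ⟨{i, j}, by rw [Finset.card_pair h]; exact ⟨1, rfl⟩⟩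

open MvPolynomial in
/-- The monomial map `φ_T : ℂ[q_x] → ℂ[b₀, b_v]`, `q_x ↦ b₀ ∏_{v ∈ top(x)} b_v`. -/
noncomputable def phiCFNMC (n : ℕ) (t : PhyloTree) :
    MvPolynomial (EvenSubsets n) ℂ →ₐ[ℂ] MvPolynomial (Option PhyloTree) ℂ :=
  aeval (fun x => X none * ∏ s ∈ t.topSet x.toNat, X (some s))

/-- The CFN-MC ideal `I_T = ker φ_T`. -/
noncomputable def cfnIdeal (n : ℕ) (t : PhyloTree) : Ideal (MvPolynomial (EvenSubsets n) ℂ) :=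
  RingHom.ker (phiCFNMC n t)

/-- The matrix `A_T` of the monomial map `φ_T`: rows indexed by `{0} ∪ int(T)`,
columns indexed by `Z^n₂,even`; the column for `x` is the exponent vector
`e₀ + ∑_{v ∈ top(x)} e_v` of the monomial `φ_T(q_x)`. -/
def cfnMatrix (n : ℕ) (t : PhyloTree) :
    Matrix (Option {s // s ∈ t.internalVertices}) (EvenSubsets n) ℤ :=
  fun v x =>
    match v with
    | none => 1
    | some v => if v.1 ∈ t.topSet x.toNat then 1 else 0

/-! The columns of `A_T` span `ℤ^({0} ∪ int(T))`, so its rank is the number of rows,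
`|int(T)| + 1 = n`. Indeed the column of the zero vector is `e₀`, and for an internal vertex
`v` with children `l`, `r`, any leaves `i` below `l` and `j` below `r` give `top(1_{ij}) = {v}`,
so the column of `1_{ij}` is `e₀ + e_v`. -/

theorem Matrix.rank_eq_card_height_of_span_col_eq_top {m n R : Type*} [Fintype m] [Fintype n]
    [CommRing R] [StrongRankCondition R] {A : Matrix m n R}
    (h : Submodule.span R (Set.range A.col) = ⊤) : A.rank = Fintype.card m := by
  rw [Matrix.rank_eq_finrank_span_cols, h, finrank_top, Module.finrank_fintype_fun_eq_card]

namespace PhyloTree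

lemma leaves_nonempty : ∀ t : PhyloTree, t.leaves.Nonempty
  | leaf i => Finset.singleton_nonempty i
  | node l _ => (leaves_nonempty l).mono Finset.subset_union_left

lemma leafList_toFinset (t : PhyloTree) : t.leafList.toFinset = t.leaves := by
  induction t with
  | leaf i => simp [leafList, leaves]
  | node l r ihl ihr => simp [leafList, leaves, ihl, ihr]

lemma leaves_subset_of_mem_subtrees {s t : PhyloTree} (h : s ∈ t.subtrees) :
    s.leaves ⊆ t.leaves := by
  induction t with
  | leaf i => rw [subtrees, Finset.mem_singleton] at h; rw [h]
  | node l r ihl ihr =>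
    simp only [subtrees, Finset.mem_insert, Finset.mem_union] at h
    rcases h with rfl | h | h
    · rfl
    · exact (ihl h).trans Finset.subset_union_left
    · exact (ihr h).trans Finset.subset_union_right

lemma leafList_nodup_node {l r : PhyloTree} :
    (node l r).leafList.Nodup ↔
      l.leafList.Nodup ∧ r.leafList.Nodup ∧ Disjoint l.leaves r.leaves := by
  rw [leafList, List.nodup_append', ← leafList_toFinset, ← leafList_toFinset,
    List.disjoint_toFinset_iff_disjoint]

lemma leafList_nodup_of_mem_subtrees {s t : PhyloTree} (hnd : t.leafList.Nodup)
    (h : s ∈ t.subtrees) : s.leafList.Nodup := by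
  induction t with
  | leaf i => rw [subtrees, Finset.mem_singleton] at h; rwa [h]
  | node l r ihl ihr =>
    obtain ⟨hl, hr, -⟩ := leafList_nodup_node.mp hnd
    simp only [subtrees, Finset.mem_insert, Finset.mem_union] at h
    rcases h with rfl | h | h
    exacts [hnd, ihl hl h, ihr hr h]

lemma internalVertices_node (l r : PhyloTree) :
    (node l r).internalVertices = insert (node l r) (l.internalVertices ∪ r.internalVertices) := by
  rw [internalVertices, subtrees, Finset.filter_insert, Finset.filter_union]
  exact if_pos rfl

lemma card_internalVertices_add_one {t : PhyloTree} (hnd : t.leafList.Nodup) :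
    t.internalVertices.card + 1 = t.leaves.card := by
  induction t with
  | leaf i => rfl
  | node l r ihl ihr =>
    obtain ⟨hl, hr, hd⟩ := leafList_nodup_node.mp hnd
    have hsub : Disjoint l.subtrees r.subtrees := by
      refine Finset.disjoint_left.mpr fun s hsl hsr => ?_
      obtain ⟨a, ha⟩ := leaves_nonempty s
      exact Finset.disjoint_left.mp hd (leaves_subset_of_mem_subtrees hsl ha)
        (leaves_subset_of_mem_subtrees hsr ha)
    have hroot : node l r ∉ l.subtrees ∪ r.subtrees := by
      obtain ⟨a, ha⟩ := leaves_nonempty l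
      obtain ⟨b, hb⟩ := leaves_nonempty r
      intro h
      rcases Finset.mem_union.mp h with h | h
      · exact Finset.disjoint_left.mp hd
          (leaves_subset_of_mem_subtrees h (Finset.mem_union_right _ hb)) hb
      · exact Finset.disjoint_left.mp hd ha
          (leaves_subset_of_mem_subtrees h (Finset.mem_union_left _ ha))
    have hint : l.internalVertices ∪ r.internalVertices ⊆ l.subtrees ∪ r.subtrees :=
      Finset.union_subset_union (Finset.filter_subset _ _) (Finset.filter_subset _ _)
    have hdisj : Disjoint l.internalVertices r.internalVertices :=
      hsub.mono (Finset.filter_subset _ _) (Finset.filter_subset _ _)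
    rw [internalVertices_node, Finset.card_insert_of_notMem (fun h => hroot (hint h)),
      Finset.card_union_of_disjoint hdisj, leaves, Finset.card_union_of_disjoint hd,
      ← ihl hl, ← ihr hr]
    ring

lemma topSet_node (l r : PhyloTree) (x : Finset ℕ) :
    (node l r).topSet x =
      (if isTopOf x (node l r) then {node l r} else ∅) ∪ (l.topSet x ∪ r.topSet x) := by
  simp only [topSet, subtrees, Finset.filter_insert, Finset.filter_union]
  split_ifs <;> simp

lemma topSet_empty (t : PhyloTree) : t.topSet ∅ = ∅ :=
  Finset.filter_false_of_mem fun s _ => by cases s <;> simp [isTopOf]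

lemma topSet_eq_empty_of_card_inter_le_one {t : PhyloTree} (hnd : t.leafList.Nodup)
    {x : Finset ℕ} (hx : (x ∩ t.leaves).card ≤ 1) : t.topSet x = ∅ := by
  induction t with
  | leaf i => rfl
  | node l r ihl ihr =>
    obtain ⟨hl, hr, hd⟩ := leafList_nodup_node.mp hnd
    have hsum : (x ∩ l.leaves).card + (x ∩ r.leaves).card ≤ 1 := by
      rwa [← Finset.card_union_of_disjoint (hd.mono Finset.inter_subset_right
        Finset.inter_subset_right), ← Finset.inter_union_distrib_left]
    have hroot : isTopOf x (node l r) = false := by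
      simp only [isTopOf, Bool.and_eq_false_iff, decide_eq_false_iff_not]
      by_contra! h
      have := h.1.pos
      have := h.2.pos
      omega
    rw [topSet_node, hroot, ihl hl (by omega), ihr hr (by omega)]
    rfl

lemma topSet_pair {t : PhyloTree} (hnd : t.leafList.Nodup) {l r : PhyloTree}
    (hmem : node l r ∈ t.subtrees) {i j : ℕ} (hi : i ∈ l.leaves) (hj : j ∈ r.leaves) :
    t.topSet {i, j} = {node l r} := by
  induction t with
  | leaf a => simp [subtrees] at hmem
  | node L R ihL ihR =>
    obtain ⟨hL, hR, hd⟩ := leafList_nodup_node.mp hnd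
    have hpair : ({i, j} : Finset ℕ) ⊆ (node l r).leaves := by
      simp [Finset.insert_subset_iff, leaves, hi, hj]
    simp only [subtrees, Finset.mem_insert, Finset.mem_union] at hmem
    rcases hmem with heq | hmem | hmem
    · obtain ⟨rfl, rfl⟩ := node.inj heq.symm
      have hil : {i, j} ∩ L.leaves = {i} := by
        rw [Finset.insert_inter_of_mem hi,
          Finset.singleton_inter_of_notMem (Finset.disjoint_right.mp hd hj)]
        rfl
      have hjr : {i, j} ∩ R.leaves = {j} := by
        rw [Finset.insert_inter_of_notMem (Finset.disjoint_left.mp hd hi),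
          Finset.singleton_inter_of_mem hj]
      rw [topSet_node, topSet_eq_empty_of_card_inter_le_one hL (by rw [hil]; rfl),
        topSet_eq_empty_of_card_inter_le_one hR (by rw [hjr]; rfl)]
      simp [isTopOf, hil, hjr]
    · have hR0 : {i, j} ∩ R.leaves = ∅ := Finset.disjoint_iff_inter_eq_empty.mp
        (hd.mono_left (hpair.trans (leaves_subset_of_mem_subtrees hmem)))
      rw [topSet_node, ihL hL hmem, topSet_eq_empty_of_card_inter_le_one hR (by simp [hR0])]
      simp [isTopOf, hR0]
    · have hL0 : {i, j} ∩ L.leaves = ∅ := Finset.disjoint_iff_inter_eq_empty.mp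
        (hd.symm.mono_left (hpair.trans (leaves_subset_of_mem_subtrees hmem)))
      rw [topSet_node, ihR hR hmem, topSet_eq_empty_of_card_inter_le_one hL (by simp [hL0])]
      simp [isTopOf, hL0]

end PhyloTree

open PhyloTree

lemma exists_topSet_toNat_eq_singleton {n : ℕ} {t : PhyloTree} (ht : t.IsPhylo n)
    {v : PhyloTree} (hv : v ∈ t.internalVertices) :
    ∃ x : EvenSubsets n, t.topSet x.toNat = {v} := by
  obtain ⟨hvt, hvi⟩ := Finset.mem_filter.mp hv
  cases v with
  | leaf a => exact absurd hvi Bool.false_ne_true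
  | node l r =>
    obtain ⟨i, hi⟩ := leaves_nonempty l
    obtain ⟨j, hj⟩ := leaves_nonempty r
    have hd := (leafList_nodup_node.mp (leafList_nodup_of_mem_subtrees ht.1 hvt)).2.2
    have hlt : ∀ k ∈ (node l r).leaves, k < n := fun k hk => by
      rw [← Finset.mem_range, ← ht.2, leafList_toFinset]
      exact leaves_subset_of_mem_subtrees hvt hk
    let i' : Fin n := ⟨i, hlt i (Finset.mem_union_left _ hi)⟩
    let j' : Fin n := ⟨j, hlt j (Finset.mem_union_right _ hj)⟩
    have hij : i' ≠ j' := fun h => Finset.disjoint_left.mp hd hi (Fin.mk.inj_iff.mp h ▸ hj)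
    refine ⟨pairIdx i' j' hij, ?_⟩
    rw [← topSet_pair ht.1 hvt hi hj]
    simp [EvenSubsets.toNat, pairIdx, i', j']

lemma cfnMatrix_col_empty (n : ℕ) (t : PhyloTree) :
    (cfnMatrix n t).col ⟨∅, Even.zero⟩ = Pi.single none 1 := by
  ext (_ | v)
  · rfl
  · simp [cfnMatrix, EvenSubsets.toNat, topSet_empty]

lemma cfnMatrix_col_of_topSet_eq_singleton {n : ℕ} {t : PhyloTree} {x : EvenSubsets n}
    {v : {s // s ∈ t.internalVertices}} (hx : t.topSet x.toNat = {v.1}) :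
    (cfnMatrix n t).col x = Pi.single none 1 + Pi.single (some v) 1 := by
  ext (_ | w)
  · simp [cfnMatrix]
  · simp only [Matrix.col_apply, cfnMatrix, hx, Finset.mem_singleton, ← Subtype.ext_iff,
      Pi.add_apply, Pi.single_apply, reduceCtorEq, if_false, zero_add, Option.some.injEq]

lemma span_col_cfnMatrix_eq_top {n : ℕ} {t : PhyloTree} (ht : t.IsPhylo n) :
    Submodule.span ℤ (Set.range (cfnMatrix n t).col) = ⊤ := by
  set S := Submodule.span ℤ (Set.range (cfnMatrix n t).col)
  have hcol : ∀ x, (cfnMatrix n t).col x ∈ S := fun x => Submodule.subset_span ⟨x, rfl⟩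
  have hnone : Pi.single none 1 ∈ S := cfnMatrix_col_empty n t ▸ hcol _
  have hsome : ∀ v, Pi.single (some v) 1 ∈ S := fun v => by
    obtain ⟨x, hx⟩ := exists_topSet_toNat_eq_singleton ht v.2
    simpa [cfnMatrix_col_of_topSet_eq_singleton hx] using S.sub_mem (hcol x) hnone
  rw [eq_top_iff, ← (Pi.basisFun ℤ _).span_eq, Submodule.span_le]
  rintro _ ⟨_ | v, rfl⟩ <;> rw [Pi.basisFun_apply]
  exacts [hnone, hsome v]

/-- For a rooted binary phylogenetic tree on `n` leaves, the matrix `A_T` has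
rank `n` (the number of its rows). -/
theorem cfnMatrix_rank (n : ℕ) (t : PhyloTree) (ht : PhyloTree.IsPhylo n t) :
    (cfnMatrix n t).rank = n := by
  rw [Matrix.rank_eq_card_height_of_span_col_eq_top (span_col_cfnMatrix_eq_top ht),
    Fintype.card_option, Fintype.card_coe, card_internalVertices_add_one ht.1,
    ← leafList_toFinset, ht.2, Finset.card_range]
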